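/- arXiv:2002.06262 — 2 statements merged into one kernel-verified Lean document; each statement's English description precedes it below -/
import Mathlib

section
/- Fix K₀ ∈ [-1,1) and define the sequence K_{ℓ} = σ̂(K_{ℓ-1}) where σ̂(ρ) = (√(1-ρ²) + (π - arccos ρ)·ρ)/π. Then the sequence (K_ℓ) is nondecreasing, bounded above by 1, and converges to 1 as ℓ → ∞. -/
/-!
With θ = arccos ρ, the numerator of σ̂(ρ) is sin θ + (π - θ) cos θ. Since sin θ ≤ θ this is at
most π, so σ̂ maps [-1,1] into itself; since θ cos θ < sin θ for ρ < 1 (i.e. θ < tan θ when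
ρ > 0), we get σ̂(ρ) > ρ below 1, so 1 is the only fixed point of σ̂ in [-1,1]. The iterates
therefore increase, stay in [-1,1], and their limit, a fixed point of the continuous map σ̂,
must be 1.
-/

open Real Filter

/-- Dual activation of the normalized ReLU. -/
noncomputable def hatSigma (ρ : ℝ) : ℝ :=
  (Real.sqrt (1 - ρ ^ 2) + (π - Real.arccos ρ) * ρ) / π

open Set Function

lemma mul_arccos_lt_sqrt_one_sub_sq {ρ : ℝ} (h1 : -1 ≤ ρ) (h2 : ρ < 1) :
    ρ * arccos ρ < √(1 - ρ ^ 2) := by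
  have harccos_pos : 0 < arccos ρ := arccos_pos.mpr h2
  rcases lt_trichotomy ρ 0 with hneg | rfl | hpos
  · exact (mul_neg_of_neg_of_pos hneg harccos_pos).trans_le (sqrt_nonneg _)
  · simp
  · have hcos : cos (arccos ρ) = ρ := cos_arccos h1 h2.le
    have htan : arccos ρ < tan (arccos ρ) :=
      lt_tan harccos_pos (arccos_lt_pi_div_two.mpr hpos)
    rw [tan_eq_sin_div_cos, hcos, sin_arccos, lt_div_iff₀ hpos] at htan
    linarith

lemma lt_hatSigma {ρ : ℝ} (h1 : -1 ≤ ρ) (h2 : ρ < 1) : ρ < hatSigma ρ := by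
  rw [hatSigma, lt_div_iff₀ pi_pos]
  linarith [mul_arccos_lt_sqrt_one_sub_sq h1 h2]

lemma hatSigma_one : hatSigma 1 = 1 := by
  simp [hatSigma, pi_ne_zero]

lemma le_hatSigma {ρ : ℝ} (h1 : -1 ≤ ρ) (h2 : ρ ≤ 1) : ρ ≤ hatSigma ρ := by
  rcases h2.lt_or_eq with hlt | rfl
  · exact (lt_hatSigma h1 hlt).le
  · exact hatSigma_one.ge

lemma hatSigma_le_one {ρ : ℝ} (h : ρ ≤ 1) : hatSigma ρ ≤ 1 := by
  have hsqrt : √(1 - ρ ^ 2) ≤ arccos ρ := sin_arccos ρ ▸ sin_le (arccos_nonneg ρ)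
  have hlin : (π - arccos ρ) * ρ ≤ π - arccos ρ :=
    mul_le_of_le_one_right (sub_nonneg.mpr (arccos_le_pi ρ)) h
  rw [hatSigma, div_le_one pi_pos]
  linarith

lemma mapsTo_hatSigma_Icc : MapsTo hatSigma (Icc (-1) 1) (Icc (-1) 1) :=
  fun _ ⟨h1, h2⟩ => ⟨h1.trans (le_hatSigma h1 h2), hatSigma_le_one h2⟩

lemma continuous_hatSigma : Continuous hatSigma := by
  unfold hatSigma
  fun_prop

lemma eq_one_of_isFixedPt_hatSigma {ρ : ℝ} (hρ : ρ ∈ Icc (-1) 1) (hfix : IsFixedPt hatSigma ρ) :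
    ρ = 1 :=
  hρ.2.eq_of_not_lt fun hlt => (lt_hatSigma hρ.1 hlt).ne' hfix

/-- The iterates K_{ℓ} = σ̂(K_{ℓ-1}) starting from K₀ ∈ [-1,1) are nondecreasing,
bounded above by 1, and converge to 1. -/
theorem iterates_to_one (K₀ : ℝ) (h : K₀ ∈ Set.Ico (-1 : ℝ) 1)
    (K : ℕ → ℝ) (h0 : K 0 = K₀) (hrec : ∀ ℓ : ℕ, K (ℓ + 1) = hatSigma (K ℓ)) :
    Monotone K ∧ (∀ ℓ, K ℓ ≤ 1) ∧ Tendsto K atTop (nhds 1) := by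
  have hK : K = fun ℓ => hatSigma^[ℓ] K₀ := by
    funext ℓ
    induction ℓ with
    | zero => exact h0
    | succ ℓ ih => rw [hrec, ih, iterate_succ_apply']
  subst hK
  have hmem : ∀ ℓ, hatSigma^[ℓ] K₀ ∈ Icc (-1) 1 :=
    fun ℓ => mapsTo_hatSigma_Icc.iterate ℓ (Ico_subset_Icc_self h)
  have hmono : Monotone fun ℓ => hatSigma^[ℓ] K₀ := monotone_nat_of_le_succ fun ℓ => by
    rw [iterate_succ_apply']
    exact le_hatSigma (hmem ℓ).1 (hmem ℓ).2
  have hbdd : BddAbove (range fun ℓ => hatSigma^[ℓ] K₀) :=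
    ⟨1, forall_mem_range.mpr fun ℓ => (hmem ℓ).2⟩
  have hlim := tendsto_atTop_ciSup hmono hbdd
  have hsup_mem : (⨆ ℓ, hatSigma^[ℓ] K₀) ∈ Icc (-1) 1 :=
    ⟨(hmem 0).1.trans (le_ciSup hbdd 0), ciSup_le fun ℓ => (hmem ℓ).2⟩
  have hsup_eq : (⨆ ℓ, hatSigma^[ℓ] K₀) = 1 := eq_one_of_isFixedPt_hatSigma hsup_mem
    (isFixedPt_of_tendsto_iterate hlim continuous_hatSigma.continuousAt)
  exact ⟨hmono, fun ℓ => (hmem ℓ).2, hsup_eq ▸ hlim⟩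
end

section
/- For any 2×2 positive semidefinite matrix Σ with diagonal entries a = Σ₁₁ > 0 and c = Σ₂₂ > 0, the dual kernel of the normalized ReLU σ(z)=√2 max(0,z) satisfies ψ_σ(Σ) := E_{(X,X̃)~N(0,Σ)}[σ(X)σ(X̃)] = √(ac)·σ̂(b/√(ac)), where b = Σ₁₂ and σ̂(ρ) = (√(1-ρ²)+(π-arccos ρ)ρ)/π. -/
/-!
Write the Gaussian vector as `(√a X, √c (ρ X + √(1 - ρ²) Y))` with `X, Y` independent standard
normals and `ρ = b / √(ac)`; positive homogeneity of `σ` pulls out the factor `√a √c = √(ac)`.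
With `ρ = cos α`, `α ∈ [0, π]`, the integrand `σ(x) σ(x cos α + y sin α)` is homogeneous of
degree 2, so in polar coordinates the Gaussian integral factors into the radial moment
`∫₀^∞ r³ e^{-r²/2} dr = 2` times the angular integral of `σ(cos θ) σ(cos (θ - α))`. The latter is
supported on `(α - π/2, π/2)`, where it equals `cos α + cos (2θ - α)`, and so integrates to
`sin α + (π - α) cos α`.
-/

open MeasureTheory ProbabilityTheory Real

/-- Normalized ReLU: σ(z) = √2 · max(0,z). -/
noncomputable def nrelu (z : ℝ) : ℝ := Real.sqrt 2 * max 0 z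

/-- Product of two standard Gaussians on ℝ². A bivariate centered Gaussian with
covariance ((a,b),(b,c)) is represented as (√a·z₁, √c·(ρz₁ + √(1-ρ²)z₂)),
where ρ = b/√(ac). -/
noncomputable def stdGauss2 : Measure (ℝ × ℝ) :=
  (gaussianReal 0 1).prod (gaussianReal 0 1)

open Set

lemma nrelu_of_nonneg {z : ℝ} (hz : 0 ≤ z) : nrelu z = √2 * z := by
  rw [nrelu, max_eq_right hz]

lemma nrelu_of_nonpos {z : ℝ} (hz : z ≤ 0) : nrelu z = 0 := by
  rw [nrelu, max_eq_left hz, mul_zero]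

lemma nrelu_mul_of_nonneg {r : ℝ} (hr : 0 ≤ r) (z : ℝ) : nrelu (r * z) = r * nrelu z := by
  rw [nrelu, nrelu, ← mul_zero r, ← mul_max_of_nonneg _ _ hr, mul_zero, mul_left_comm]

lemma integral_stdGauss2 (G : ℝ × ℝ → ℝ) :
    ∫ p, G p ∂stdGauss2 = (2 * π)⁻¹ * ∫ p : ℝ × ℝ, exp (-(p.1 ^ 2 + p.2 ^ 2) / 2) * G p := by
  unfold stdGauss2
  rw [gaussianReal_of_var_ne_zero _ one_ne_zero,
    prod_withDensity (measurable_gaussianPDF _ _) (measurable_gaussianPDF _ _),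
    ← Measure.volume_eq_prod, integral_withDensity_eq_integral_toReal_smul (by fun_prop)
      (ae_of_all _ fun _ => ENNReal.mul_lt_top gaussianPDF_lt_top gaussianPDF_lt_top),
    ← integral_const_mul]
  congr 1 with p
  simp only [ENNReal.toReal_mul, toReal_gaussianPDF, gaussianPDFReal, smul_eq_mul,
    NNReal.coe_one, mul_one, sub_zero]
  field_simp
  rw [sq_sqrt (by positivity), add_div, neg_add, exp_add]
  ring

lemma integral_Ioi_pow_three_mul_exp_neg_sq_div_two :
    ∫ r in Ioi (0 : ℝ), r ^ 3 * exp (-(r ^ 2) / 2) = 2 := by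
  have h := integral_rpow_mul_exp_neg_mul_rpow (p := 2) (q := 3) (b := 1 / 2) two_pos
    (by norm_num) (by norm_num)
  norm_num at h
  convert h using 5 with x
  ring

theorem integral_exp_neg_sq_mul_of_homogeneous (h : ℝ × ℝ → ℝ)
    (hh : ∀ r : ℝ, 0 < r → ∀ p, h (r • p) = r ^ 2 * h p) :
    ∫ p : ℝ × ℝ, exp (-(p.1 ^ 2 + p.2 ^ 2) / 2) * h p
      = 2 * ∫ θ in Ioo (-π) π, h (cos θ, sin θ) := by
  rw [← integral_comp_polarCoord_symm, polarCoord_target]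
  calc _ = ∫ q in Ioi 0 ×ˢ Ioo (-π) π, q.1 ^ 3 * exp (-(q.1 ^ 2) / 2) * h (cos q.2, sin q.2) := by
        refine setIntegral_congr_fun (measurableSet_Ioi.prod measurableSet_Ioo) ?_
        rintro ⟨r, θ⟩ ⟨hr, -⟩
        have hsq : (r * cos θ) ^ 2 + (r * sin θ) ^ 2 = r ^ 2 := by
          rw [mul_pow, mul_pow, ← mul_add, cos_sq_add_sin_sq, mul_one]
        have hpt : (r * cos θ, r * sin θ) = r • (cos θ, sin θ) := by simp
        simp only [polarCoord_symm_apply, smul_eq_mul]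
        rw [hsq, hpt, hh r hr]
        ring
    _ = _ := by
        rw [Measure.volume_eq_prod, ← Measure.prod_restrict,
          integral_prod_mul (fun r => r ^ 3 * exp (-(r ^ 2) / 2)) (fun θ => h (cos θ, sin θ)),
          integral_Ioi_pow_three_mul_exp_neg_sq_div_two]

lemma nrelu_cos_mul_nrelu_cos_sub {α θ : ℝ} (hα : α ∈ Icc 0 π) (hθ : θ ∈ Ioo (-π) π) :
    nrelu (cos θ) * nrelu (cos (θ - α))
      = (Ioo (α - π / 2) (π / 2)).indicator (fun θ => 2 * (cos θ * cos (θ - α))) θ := by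
  obtain ⟨hα0, hαπ⟩ := hα
  obtain ⟨hθl, hθr⟩ := hθ
  by_cases hmem : θ ∈ Ioo (α - π / 2) (π / 2)
  · have ⟨hl, hr⟩ := hmem
    rw [indicator_of_mem hmem, nrelu_of_nonneg (cos_nonneg_of_mem_Icc ⟨by linarith, hr.le⟩),
      nrelu_of_nonneg (cos_nonneg_of_mem_Icc ⟨by linarith, by linarith⟩)]
    linear_combination cos θ * cos (θ - α) * mul_self_sqrt (zero_le_two (α := ℝ))
  rw [indicator_of_notMem hmem]
  rcases le_or_gt (π / 2) θ with hθ2 | hθ2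
  · rw [nrelu_of_nonpos (cos_nonpos_of_pi_div_two_le_of_le hθ2 (by linarith)), zero_mul]
  rcases le_or_gt θ (-(π / 2)) with hθ1 | hθ1
  · have hcos : cos θ ≤ 0 := by
      rw [← cos_neg]
      exact cos_nonpos_of_pi_div_two_le_of_le (by linarith) (by linarith)
    rw [nrelu_of_nonpos hcos, zero_mul]
  · have hθα : θ ≤ α - π / 2 := by
      by_contra! h
      exact hmem (mem_Ioo.2 ⟨h, hθ2⟩)
    have hcos : cos (θ - α) ≤ 0 := by
      rw [← cos_neg]
      exact cos_nonpos_of_pi_div_two_le_of_le (by linarith) (by linarith)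
    rw [nrelu_of_nonpos hcos, mul_zero]

lemma integral_nrelu_cos_mul_nrelu_cos_sub {α : ℝ} (hα : α ∈ Icc 0 π) :
    ∫ θ in Ioo (-π) π, nrelu (cos θ) * nrelu (cos (θ - α)) = sin α + (π - α) * cos α := by
  have hsub : Ioo (α - π / 2) (π / 2) ⊆ Ioo (-π) π := Ioo_subset_Ioo
    (by linarith [hα.1, pi_pos]) (by linarith [pi_pos])
  have hderiv : ∀ θ ∈ uIcc (α - π / 2) (π / 2),
      HasDerivAt (fun θ => θ * cos α + sin (2 * θ - α) / 2) (2 * (cos θ * cos (θ - α))) θ := by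
    intro θ _
    have h := ((hasDerivAt_id θ).mul_const (cos α)).add
      ((((hasDerivAt_id θ).const_mul 2).sub_const α).sin.div_const 2)
    refine h.congr_deriv ?_
    rw [id, cos_sub, sub_eq_add_neg, cos_add, cos_two_mul, sin_two_mul, cos_neg, sin_neg]
    ring
  rw [setIntegral_congr_fun measurableSet_Ioo fun θ hθ => nrelu_cos_mul_nrelu_cos_sub hα hθ,
    setIntegral_indicator measurableSet_Ioo, inter_eq_self_of_subset_right hsub,
    ← integral_Ioc_eq_integral_Ioo, ← intervalIntegral.integral_of_le (by linarith [hα.2]),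
    intervalIntegral.integral_eq_sub_of_hasDerivAt hderiv
      (Continuous.intervalIntegrable (by fun_prop) _ _),
    show 2 * (π / 2) - α = π - α by ring, show 2 * (α - π / 2) - α = -(π - α) by ring,
    sin_neg, sin_pi_sub]
  ring

theorem integral_nrelu_mul_nrelu_cos_mul_add_sin_mul {α : ℝ} (hα : α ∈ Icc 0 π) :
    ∫ p, nrelu p.1 * nrelu (cos α * p.1 + sin α * p.2) ∂stdGauss2
      = (sin α + (π - α) * cos α) / π := by
  have hhom : ∀ r : ℝ, 0 < r → ∀ p : ℝ × ℝ,
      nrelu (r • p).1 * nrelu (cos α * (r • p).1 + sin α * (r • p).2)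
        = r ^ 2 * (nrelu p.1 * nrelu (cos α * p.1 + sin α * p.2)) := by
    intro r hr p
    rw [Prod.smul_fst, Prod.smul_snd, smul_eq_mul, smul_eq_mul,
      show cos α * (r * p.1) + sin α * (r * p.2) = r * (cos α * p.1 + sin α * p.2) by ring,
      nrelu_mul_of_nonneg hr.le, nrelu_mul_of_nonneg hr.le]
    ring
  have hcircle : ∀ θ, cos α * cos θ + sin α * sin θ = cos (θ - α) := fun θ => by
    rw [cos_sub]; ring
  rw [integral_stdGauss2, integral_exp_neg_sq_mul_of_homogeneous _ hhom]
  simp only [hcircle]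
  rw [integral_nrelu_cos_mul_nrelu_cos_sub hα]
  field_simp

theorem integral_nrelu_mul_nrelu_eq_hatSigma {ρ : ℝ} (hρ : ρ ∈ Icc (-1) 1) :
    ∫ p, nrelu p.1 * nrelu (ρ * p.1 + √(1 - ρ ^ 2) * p.2) ∂stdGauss2 = hatSigma ρ := by
  have h := integral_nrelu_mul_nrelu_cos_mul_add_sin_mul ⟨arccos_nonneg ρ, arccos_le_pi ρ⟩
  rwa [cos_arccos hρ.1 hρ.2, sin_arccos] at h

/-- Positive homogeneity of the ReLU dual kernel: for a 2×2 PSD matrix with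
positive diagonal a, c and off-diagonal b, ψ_σ(Σ) = √(ac)·σ̂(b/√(ac)). -/
theorem psi_sigma_homogeneous (a b c : ℝ) (ha : 0 < a) (hc : 0 < c)
    (hpsd : b ^ 2 ≤ a * c) :
    ∫ p : ℝ × ℝ,
        nrelu (Real.sqrt a * p.1) *
          nrelu (Real.sqrt c * ((b / Real.sqrt (a * c)) * p.1 +
            Real.sqrt (1 - (b / Real.sqrt (a * c)) ^ 2) * p.2)) ∂stdGauss2
      = Real.sqrt (a * c) * hatSigma (b / Real.sqrt (a * c)) := by
  set ρ := b / √(a * c)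
  have hac : 0 < a * c := mul_pos ha hc
  have hρ : ρ ∈ Icc (-1) 1 := by
    rw [mem_Icc, ← abs_le, ← sq_le_one_iff_abs_le_one, div_pow, sq_sqrt hac.le]
    exact div_le_one_of_le₀ hpsd hac.le
  simp_rw [nrelu_mul_of_nonneg (sqrt_nonneg _)]
  conv_lhs => enter [2, p]; rw [mul_mul_mul_comm, ← sqrt_mul ha.le]
  rw [integral_const_mul, integral_nrelu_mul_nrelu_eq_hatSigma hρ]
end
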